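/- arXiv:2210.07800 — 2 statements merged into one kernel-verified Lean document; each statement's English description precedes it below -/
import Mathlib

section
/- Let Φ ∈ ℝ^{M×N} have restricted isometry constant δ_{K'+K_prev+K} of order K'+K_prev+K. Let x ∈ ℝ^N be K-sparse, y = Φx, let w ∈ ℝ^N be K_prev-sparse, let Λ' be a top-K' support of w + Φᵀ(y − Φw), let x' be a least-squares estimate of y on Λ', and let Γ be a top-K' support of x. Then ‖(x' − x)_{Λ̄'}‖ ≤ √2·δ_{K'+K_prev+K}·‖w − x‖ + √2·‖x_{Γ̄}‖. -/
open Finset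

noncomputable section

/-- The Euclidean (ℓ₂) norm of a vector in `Fin n → ℝ`. -/
def l2norm {n : ℕ} (v : Fin n → ℝ) : ℝ := Real.sqrt (∑ i, (v i) ^ 2)

/-- The sparsity `‖v‖₀` of a vector: the number of its nonzero entries. -/
def sparsity {n : ℕ} (v : Fin n → ℝ) : ℕ := (Finset.univ.filter fun i => v i ≠ 0).card

/-- The support of a vector, as a `Finset`. -/
def suppF {n : ℕ} (v : Fin n → ℝ) : Finset (Fin n) := Finset.univ.filter fun i => v i ≠ 0

/-- `restr v S` is the vector agreeing with `v` on `S` and zero outside `S`. -/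
def restr {n : ℕ} (v : Fin n → ℝ) (S : Finset (Fin n)) : Fin n → ℝ :=
  fun i => if i ∈ S then v i else 0

/-- `Φ` has restricted isometry constant `δ < 1` of order `s`:
`(1-δ)‖z‖² ≤ ‖Φz‖² ≤ (1+δ)‖z‖²` for every `s`-sparse `z`. -/
def HasRIC {M N : ℕ} (Φ : Matrix (Fin M) (Fin N) ℝ) (s : ℕ) (δ : ℝ) : Prop :=
  δ < 1 ∧ ∀ z : Fin N → ℝ, sparsity z ≤ s →
    (1 - δ) * (l2norm z) ^ 2 ≤ (l2norm (Φ.mulVec z)) ^ 2 ∧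
      (l2norm (Φ.mulVec z)) ^ 2 ≤ (1 + δ) * (l2norm z) ^ 2

/-- `Λ` is a top-`k` support of `v`: `|Λ| = k` and every entry of `v` inside `Λ`
dominates (in magnitude) every entry outside `Λ`. -/
def IsTopSupport {n : ℕ} (v : Fin n → ℝ) (k : ℕ) (Λ : Finset (Fin n)) : Prop :=
  Λ.card = k ∧ ∀ i ∈ Λ, ∀ j ∉ Λ, |v j| ≤ |v i|

/-- `x'` is a least-squares estimate of `y` on the support `Λ`. -/
def IsLSE {M N : ℕ} (Φ : Matrix (Fin M) (Fin N) ℝ) (y : Fin M → ℝ)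
    (Λ : Finset (Fin N)) (x' : Fin N → ℝ) : Prop :=
  suppF x' ⊆ Λ ∧ ∀ z : Fin N → ℝ, suppF z ⊆ Λ →
    l2norm (y - Φ.mulVec x') ≤ l2norm (y - Φ.mulVec z)

namespace HTPaux

variable {n : ℕ}

lemma sq2_nonneg (v : Fin n → ℝ) : (0:ℝ) ≤ ∑ i, (v i)^2 :=
  Finset.sum_nonneg fun _ _ => sq_nonneg _

lemma l2norm_nonneg (v : Fin n → ℝ) : 0 ≤ l2norm v := Real.sqrt_nonneg _

lemma l2norm_sq (v : Fin n → ℝ) : (l2norm v)^2 = ∑ i, (v i)^2 :=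
  Real.sq_sqrt (sq2_nonneg v)

lemma l2norm_le {v : Fin n → ℝ} {r : ℝ} (hr : 0 ≤ r) (h : ∑ i, (v i)^2 ≤ r^2) :
    l2norm v ≤ r := by
  have := Real.sqrt_le_sqrt h
  rwa [Real.sqrt_sq hr] at this

lemma l2norm_mono_sum {v u : Fin n → ℝ} (h : ∑ i, (v i)^2 ≤ ∑ i, (u i)^2) :
    l2norm v ≤ l2norm u := Real.sqrt_le_sqrt h

lemma l2norm_triangle (a b : Fin n → ℝ) : l2norm (a + b) ≤ l2norm a + l2norm b := by
  have hA := l2norm_sq a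
  have hB := l2norm_sq b
  have cs : ∑ i, a i * b i ≤ l2norm a * l2norm b := by
    have := Real.sum_mul_le_sqrt_mul_sqrt Finset.univ a b
    simpa [l2norm] using this
  refine l2norm_le (add_nonneg (l2norm_nonneg a) (l2norm_nonneg b)) ?_
  have expand : ∑ i, ((a + b) i)^2
      = (∑ i, (a i)^2) + 2 * (∑ i, a i * b i) + ∑ i, (b i)^2 := by
    have h1 : ∀ i : Fin n, ((a + b) i)^2 = (a i)^2 + 2*(a i * b i) + (b i)^2 := by
      intro i; simp only [Pi.add_apply]; ring
    simp_rw [h1]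
    rw [Finset.sum_add_distrib, Finset.sum_add_distrib, ← Finset.mul_sum]
  rw [expand]
  nlinarith [cs, hA, hB]

lemma sum_sq_restr (v : Fin n → ℝ) (S : Finset (Fin n)) :
    ∑ i, (restr v S i)^2 = ∑ i ∈ S, (v i)^2 := by
  have h1 : ∀ i : Fin n, (restr v S i)^2 = if i ∈ S then (v i)^2 else 0 := by
    intro i; unfold restr; split <;> simp
  simp_rw [h1]
  rw [Finset.sum_ite_mem, Finset.univ_inter]

lemma sum_sq_restr_mono (v : Fin n → ℝ) {S T : Finset (Fin n)} (h : S ⊆ T) :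
    ∑ i, (restr v S i)^2 ≤ ∑ i, (restr v T i)^2 := by
  rw [sum_sq_restr, sum_sq_restr]
  exact Finset.sum_le_sum_of_subset_of_nonneg h (fun i _ _ => sq_nonneg _)

lemma l2norm_restr_mono (v : Fin n → ℝ) {S T : Finset (Fin n)} (h : S ⊆ T) :
    l2norm (restr v S) ≤ l2norm (restr v T) :=
  Real.sqrt_le_sqrt (sum_sq_restr_mono v h)

lemma sum_sq_restr_union (v : Fin n → ℝ) {S T : Finset (Fin n)} (h : Disjoint S T) :
    ∑ i, (restr v (S ∪ T) i)^2 = (∑ i, (restr v S i)^2) + ∑ i, (restr v T i)^2 := by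
  rw [sum_sq_restr, sum_sq_restr, sum_sq_restr, Finset.sum_union h]

lemma restr_inter_supp (v : Fin n → ℝ) (S : Finset (Fin n)) :
    restr v (S ∩ suppF v) = restr v S := by
  funext i
  unfold restr suppF
  by_cases h : i ∈ S
  · by_cases h2 : v i = 0 <;> simp [h, h2]
  · simp [h]

lemma restr_add (f g : Fin n → ℝ) (S : Finset (Fin n)) :
    restr (f + g) S = restr f S + restr g S := by
  funext i
  unfold restr
  by_cases h : i ∈ S <;> simp [h]

lemma l2norm_sub_comm (a b : Fin n → ℝ) : l2norm (a - b) = l2norm (b - a) := by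
  unfold l2norm
  congr 1
  apply Finset.sum_congr rfl
  intro i _
  simp only [Pi.sub_apply]
  ring

lemma l2norm_restr_sub_comm (a b : Fin n → ℝ) (T : Finset (Fin n)) :
    l2norm (restr (a - b) T) = l2norm (restr (b - a) T) := by
  unfold l2norm restr
  congr 1
  apply Finset.sum_congr rfl
  intro i _
  by_cases h : i ∈ T <;> simp only [h, if_true, if_false, Pi.sub_apply]
  · ring

lemma suppF_subset_iff {v : Fin n → ℝ} {S : Finset (Fin n)} :
    suppF v ⊆ S ↔ ∀ i, i ∉ S → v i = 0 := by
  constructor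
  · intro h i hi
    by_contra hne
    exact hi (h (by simp [suppF, hne]))
  · intro h i hi
    simp only [suppF, Finset.mem_filter] at hi
    by_contra hS
    exact hi.2 (h i hS)

lemma sparsity_eq_card (v : Fin n → ℝ) : sparsity v = (suppF v).card := rfl

lemma suppF_add_subset (a b : Fin n → ℝ) : suppF (a + b) ⊆ suppF a ∪ suppF b := by
  intro i hi
  simp only [suppF, Finset.mem_filter, Finset.mem_union, Finset.mem_univ, true_and,
    Pi.add_apply] at *
  by_contra h
  push_neg at h
  rw [h.1, h.2] at hi
  simp at hi

lemma suppF_sub_subset (a b : Fin n → ℝ) : suppF (a - b) ⊆ suppF a ∪ suppF b := by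
  intro i hi
  simp only [suppF, Finset.mem_filter, Finset.mem_union, Finset.mem_univ, true_and,
    Pi.sub_apply] at *
  by_contra h
  push_neg at h
  rw [h.1, h.2] at hi
  simp at hi

lemma suppF_smul_subset (c : ℝ) (a : Fin n → ℝ) :
    suppF (fun i => c * a i) ⊆ suppF a := by
  intro i hi
  simp only [suppF, Finset.mem_filter, Finset.mem_univ, true_and] at *
  intro h
  rw [h] at hi
  simp at hi

lemma eq_zero_of_sparsity_zero {v : Fin n → ℝ} (h : sparsity v = 0) : v = 0 := by
  funext i
  show v i = 0
  by_contra hne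
  have hmem : i ∈ Finset.univ.filter fun i => v i ≠ 0 := by simp [hne]
  rw [Finset.card_eq_zero.mp h] at hmem
  simp at hmem

lemma sum_sq_add (a b : Fin n → ℝ) :
    ∑ i, (a i + b i)^2 = (∑ i, (a i)^2) + 2 * (∑ i, a i * b i) + ∑ i, (b i)^2 := by
  have h1 : ∀ i : Fin n, (a i + b i)^2 = (a i)^2 + 2*(a i * b i) + (b i)^2 := by
    intro i; ring
  simp_rw [h1]
  rw [Finset.sum_add_distrib, Finset.sum_add_distrib, ← Finset.mul_sum]

lemma sum_sq_sub (a b : Fin n → ℝ) :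
    ∑ i, (a i - b i)^2 = (∑ i, (a i)^2) - 2 * (∑ i, a i * b i) + ∑ i, (b i)^2 := by
  have h1 : ∀ i : Fin n, (a i - b i)^2 = (a i)^2 - 2*(a i * b i) + (b i)^2 := by
    intro i; ring
  simp_rw [h1]
  rw [Finset.sum_add_distrib, Finset.sum_sub_distrib, ← Finset.mul_sum]

lemma le_of_sq_le_sq {a b : ℝ} (ha : 0 ≤ a) (hb : 0 ≤ b) (h : a^2 ≤ b^2) : a ≤ b := by
  calc a = Real.sqrt (a^2) := (Real.sqrt_sq ha).symm
    _ ≤ Real.sqrt (b^2) := Real.sqrt_le_sqrt h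
    _ = b := Real.sqrt_sq hb

lemma topsupport_sum_le {u : Fin n → ℝ} {Λ : Finset (Fin n)}
    (hdom : ∀ i ∈ Λ, ∀ j ∉ Λ, |u j| ≤ |u i|)
    {B C : Finset (Fin n)} (hBC : B.card = C.card)
    (hB : ∀ j ∈ B, j ∉ Λ) (hC : C ⊆ Λ) :
    ∑ j ∈ B, (u j)^2 ≤ ∑ i ∈ C, (u i)^2 := by
  have e : (B : Finset (Fin n)) ≃ (C : Finset (Fin n)) := Finset.equivOfCardEq hBC
  rw [← Finset.sum_coe_sort B (fun j => (u j)^2),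
      ← Finset.sum_coe_sort C (fun i => (u i)^2),
      ← Equiv.sum_comp e (fun i => (u i.1)^2)]
  apply Finset.sum_le_sum
  intro b _
  have h1 : |u b.1| ≤ |u (e b).1| := hdom _ (hC (e b).2) _ (hB _ b.2)
  calc (u b.1)^2 = |u b.1|^2 := (sq_abs _).symm
    _ ≤ |u (e b).1|^2 := by
        apply pow_le_pow_left₀ (abs_nonneg _) h1
    _ = (u (e b).1)^2 := sq_abs _


lemma mulVec_smul' {M N : ℕ} (Φ : Matrix (Fin M) (Fin N) ℝ) (c : ℝ) (v : Fin N → ℝ) :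
    Φ.mulVec (fun i => c * v i) = fun j => c * Φ.mulVec v j := by
  funext j
  unfold Matrix.mulVec dotProduct
  rw [Finset.mul_sum]
  apply Finset.sum_congr rfl
  intro i _
  ring

lemma transpose_mulVec_dot {M N : ℕ} (Φ : Matrix (Fin M) (Fin N) ℝ)
    (u : Fin M → ℝ) (z : Fin N → ℝ) :
    ∑ i, Φ.transpose.mulVec u i * z i = ∑ j, u j * Φ.mulVec z j := by
  unfold Matrix.mulVec dotProduct
  simp only [Matrix.transpose_apply, Finset.sum_mul, Finset.mul_sum]
  rw [Finset.sum_comm]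
  apply Finset.sum_congr rfl
  intro j _
  apply Finset.sum_congr rfl
  intro i _
  ring

lemma rip_bilinear {M N s : ℕ} {δ : ℝ} {Φ : Matrix (Fin M) (Fin N) ℝ}
    (hRIC : HasRIC Φ s δ)
    (a b : Fin N → ℝ) (ha : sparsity (a + b) ≤ s) (hb : sparsity (a - b) ≤ s) :
    (∑ i, a i * b i) - (∑ j, Φ.mulVec a j * Φ.mulVec b j)
      ≤ δ * ((∑ i, (a i)^2) + (∑ i, (b i)^2)) / 2 := by
  obtain ⟨-, hR⟩ := hRIC
  have h1 := (hR (a + b) ha).1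
  have h2 := (hR (a - b) hb).2
  simp only [l2norm_sq, Matrix.mulVec_add, Matrix.mulVec_sub, Pi.add_apply,
    Pi.sub_apply] at h1 h2
  rw [sum_sq_add a b, sum_sq_add (Φ.mulVec a) (Φ.mulVec b)] at h1
  rw [sum_sq_sub a b, sum_sq_sub (Φ.mulVec a) (Φ.mulVec b)] at h2
  linarith

lemma rip_offdiag {M N s : ℕ} {δ : ℝ} {Φ : Matrix (Fin M) (Fin N) ℝ}
    (hRIC : HasRIC Φ s δ) (hδ : 0 ≤ δ)
    {T : Finset (Fin N)} (hT : T.card ≤ s)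
    {v z : Fin N → ℝ} (hv : suppF v ⊆ T) (hz : suppF z ⊆ T) :
    (∑ i, v i * z i) - (∑ j, Φ.mulVec v j * Φ.mulVec z j)
      ≤ δ * l2norm v * l2norm z := by
  by_cases hv0 : l2norm v = 0
  · have hvz : v = 0 := by
      have hs : ∑ i, (v i)^2 = 0 := by
        have := l2norm_sq v
        rw [hv0] at this
        simpa using this.symm
      funext i
      show v i = 0
      have := (Finset.sum_eq_zero_iff_of_nonneg (fun i _ => sq_nonneg (v i))).mp hs i
        (Finset.mem_univ i)
      exact pow_eq_zero_iff two_ne_zero |>.mp this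
    subst hvz
    simp [Matrix.mulVec_zero, hv0]
  by_cases hz0 : l2norm z = 0
  · have hzz : z = 0 := by
      have hs : ∑ i, (z i)^2 = 0 := by
        have := l2norm_sq z
        rw [hz0] at this
        simpa using this.symm
      funext i
      show z i = 0
      have := (Finset.sum_eq_zero_iff_of_nonneg (fun i _ => sq_nonneg (z i))).mp hs i
        (Finset.mem_univ i)
      exact pow_eq_zero_iff two_ne_zero |>.mp this
    subst hzz
    simp [Matrix.mulVec_zero, hz0]
  have hvpos : 0 < l2norm v := lt_of_le_of_ne (l2norm_nonneg v) (Ne.symm hv0)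
  have hzpos : 0 < l2norm z := lt_of_le_of_ne (l2norm_nonneg z) (Ne.symm hz0)
  set α := l2norm v with hα
  set β := l2norm z with hβ
  set c := Real.sqrt (β / α) with hc
  have hcpos : 0 < c := Real.sqrt_pos.mpr (div_pos hzpos hvpos)
  have hc2 : c^2 = β / α := Real.sq_sqrt (le_of_lt (div_pos hzpos hvpos))
  set a := fun i => c * v i with hadef
  set b := fun i => c⁻¹ * z i with hbdef
  have hsa : suppF (a + b) ⊆ T := by
    refine subset_trans (suppF_add_subset a b) ?_
    refine Finset.union_subset ?_ ?_
    · exact subset_trans (suppF_smul_subset c v) hv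
    · exact subset_trans (suppF_smul_subset c⁻¹ z) hz
  have hsb : suppF (a - b) ⊆ T := by
    refine subset_trans (suppF_sub_subset a b) ?_
    refine Finset.union_subset ?_ ?_
    · exact subset_trans (suppF_smul_subset c v) hv
    · exact subset_trans (suppF_smul_subset c⁻¹ z) hz
  have key := rip_bilinear hRIC a b
    (le_trans (Finset.card_le_card hsa) hT)
    (le_trans (Finset.card_le_card hsb) hT)
  have hab : ∑ i, a i * b i = ∑ i, v i * z i := by
    apply Finset.sum_congr rfl
    intro i _
    simp only [hadef, hbdef]
    field_simp
  have hΦab : ∑ j, Φ.mulVec a j * Φ.mulVec b j = ∑ j, Φ.mulVec v j * Φ.mulVec z j := by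
    rw [hadef, hbdef, mulVec_smul', mulVec_smul']
    apply Finset.sum_congr rfl
    intro j _
    field_simp
  have hsqa : ∑ i, (a i)^2 = c^2 * ∑ i, (v i)^2 := by
    rw [Finset.mul_sum]
    apply Finset.sum_congr rfl
    intro i _
    simp only [hadef]
    ring
  have hsqb : ∑ i, (b i)^2 = (c^2)⁻¹ * ∑ i, (z i)^2 := by
    rw [Finset.mul_sum]
    apply Finset.sum_congr rfl
    intro i _
    simp only [hbdef]
    rw [← inv_pow]
    ring
  rw [hab, hΦab, hsqa, hsqb, ← l2norm_sq v, ← l2norm_sq z, ← hα, ← hβ, hc2] at key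
  have hrw : δ * (β / α * α ^ 2 + (β / α)⁻¹ * β ^ 2) / 2 = δ * α * β := by
    field_simp
    ring
  rwa [hrw] at key

lemma rip_h_restr {M N s : ℕ} {δ : ℝ} {Φ : Matrix (Fin M) (Fin N) ℝ}
    (hRIC : HasRIC Φ s δ) (hδ : 0 ≤ δ)
    {T : Finset (Fin N)} (hT : T.card ≤ s)
    {v : Fin N → ℝ} (hv : suppF v ⊆ T) :
    l2norm (restr (v - Φ.transpose.mulVec (Φ.mulVec v)) T) ≤ δ * l2norm v := by
  set h := v - Φ.transpose.mulVec (Φ.mulVec v) with hh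
  set z := restr h T with hzdef
  have hzT : suppF z ⊆ T := by
    rw [suppF_subset_iff]
    intro i hi
    simp [hzdef, restr, hi]
  have hkey : ∑ i, (z i)^2 = (∑ i, v i * z i) - ∑ j, Φ.mulVec v j * Φ.mulVec z j := by
    have h1 : ∑ i, (z i)^2 = ∑ i, h i * z i := by
      apply Finset.sum_congr rfl
      intro i _
      by_cases hiT : i ∈ T <;> simp [hzdef, restr, hiT]
      ring
    rw [h1]
    have h2 : ∑ i, h i * z i = (∑ i, v i * z i) - ∑ i, Φ.transpose.mulVec (Φ.mulVec v) i * z i := by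
      rw [← Finset.sum_sub_distrib]
      apply Finset.sum_congr rfl
      intro i _
      simp only [hh, Pi.sub_apply]
      ring
    rw [h2, transpose_mulVec_dot]
  have hb := rip_offdiag hRIC hδ hT hv hzT
  rw [← hkey] at hb
  have hzsq : (l2norm z)^2 ≤ δ * l2norm v * l2norm z := by rw [l2norm_sq]; exact hb
  rcases eq_or_lt_of_le (l2norm_nonneg z) with h0 | hpos
  · rw [← h0]
    exact mul_nonneg hδ (l2norm_nonneg v)
  · nlinarith [hzsq, hpos]

end HTPaux

set_option maxHeartbeats 1000000 in
/-- bound on the off-support part of the error after one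
hard-thresholding step. -/
theorem htp_step_offsupport_bound {M N : ℕ} (Φ : Matrix (Fin M) (Fin N) ℝ)
    (K K' Kprev : ℕ) (δ : ℝ) (hRIC : HasRIC Φ (K' + Kprev + K) δ)
    (x : Fin N → ℝ) (hx : sparsity x ≤ K)
    (y : Fin M → ℝ) (hy : y = Φ.mulVec x)
    (w : Fin N → ℝ) (hw : sparsity w ≤ Kprev)
    (Λ' : Finset (Fin N))
    (hΛ' : IsTopSupport (w + Φ.transpose.mulVec (y - Φ.mulVec w)) K' Λ')
    (x' : Fin N → ℝ) (hx' : IsLSE Φ y Λ' x')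
    (Γ : Finset (Fin N)) (hΓ : IsTopSupport x K' Γ) :
    l2norm (restr (x' - x) Λ'ᶜ) ≤
      Real.sqrt 2 * δ * l2norm (w - x) + Real.sqrt 2 * l2norm (restr x Γᶜ) := by
  classical
  by_cases hs0 : K' + Kprev + K = 0
  · have hK' : K' = 0 := by omega
    have hx0 : x = 0 := HTPaux.eq_zero_of_sparsity_zero (by omega)
    have hw0 : w = 0 := HTPaux.eq_zero_of_sparsity_zero (by omega)
    have hΛ0 : Λ' = ∅ := Finset.card_eq_zero.mp (by rw [hΛ'.1, hK'])
    have hx'0 : x' = 0 := by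
      funext i
      show x' i = 0
      by_contra hne
      have hmem : i ∈ Λ' := hx'.1 (by simp [suppF, hne])
      simp [hΛ0] at hmem
    rw [hx0, hx'0, hw0]
    simp [l2norm, restr]
  by_cases hN0 : N = 0
  · subst hN0
    simp [l2norm]
  -- δ is nonnegative
  have hδ : 0 ≤ δ := by
    have i₀ : Fin N := ⟨0, Nat.pos_of_ne_zero hN0⟩
    set e : Fin N → ℝ := fun i => if i = i₀ then 1 else 0 with he
    have hse : sparsity e ≤ K' + Kprev + K := by
      have hsub : suppF e ⊆ {i₀} := by
        intro i hi
        simp only [suppF, he, Finset.mem_filter, Finset.mem_univ, true_and] at hi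
        rw [Finset.mem_singleton]
        by_contra hne
        simp [hne] at hi
      calc sparsity e = (suppF e).card := rfl
        _ ≤ 1 := by simpa using Finset.card_le_card hsub
        _ ≤ _ := by omega
    have h1 := (hRIC.2 e hse).1
    have h2 := (hRIC.2 e hse).2
    have hnorm : (l2norm e)^2 = 1 := by
      rw [HTPaux.l2norm_sq]
      rw [Finset.sum_eq_single i₀]
      · simp [he]
      · intro j _ hj; simp [he, hj]
      · intro hj; exact absurd (Finset.mem_univ i₀) hj
    rw [hnorm] at h1 h2
    linarith
  -- main argument
  set u := w + Φ.transpose.mulVec (y - Φ.mulVec w) with hu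
  set v := x - w with hv
  have hxu : x - u = v - Φ.transpose.mulVec (Φ.mulVec v) := by
    have hk : Φ.transpose.mulVec (y - Φ.mulVec w) = Φ.transpose.mulVec (Φ.mulVec v) := by
      rw [hy, ← Matrix.mulVec_sub, ← hv]
    rw [hu, hk, hv]
    funext i
    simp only [Pi.sub_apply, Pi.add_apply]
    ring
  set S : Finset (Fin N) := suppF x ∪ (Λ' \ Γ) ∪ suppF w with hS
  have hScard : S.card ≤ K' + Kprev + K := by
    have hc1 := Finset.card_union_le (suppF x ∪ (Λ' \ Γ)) (suppF w)
    have hc2 := Finset.card_union_le (suppF x) (Λ' \ Γ)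
    have h1 : (suppF x).card ≤ K := hx
    have h2 : (Λ' \ Γ).card ≤ K' := by
      calc (Λ' \ Γ).card ≤ Λ'.card := Finset.card_le_card Finset.sdiff_subset
        _ = K' := hΛ'.1
    have h3 : (suppF w).card ≤ Kprev := hw
    rw [hS]
    omega
  have hvS : suppF v ⊆ S := by
    rw [hv]
    refine subset_trans (HTPaux.suppF_sub_subset x w) ?_
    intro i hi
    rw [hS]
    rcases Finset.mem_union.mp hi with h | h
    · exact Finset.mem_union_left _ (Finset.mem_union_left _ h)
    · exact Finset.mem_union_right _ h
  have hd0 : l2norm (restr (x - u) S) ≤ δ * l2norm (w - x) := by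
    have h := HTPaux.rip_h_restr hRIC hδ hScard hvS
    rw [← hxu] at h
    have hlv : l2norm v = l2norm (w - x) := by
      rw [hv]; exact HTPaux.l2norm_sub_comm x w
    rwa [hlv] at h
  set A : Finset (Fin N) := (Γ \ Λ') ∩ suppF x with hA
  have hAsub : A ⊆ Γ \ Λ' := by rw [hA]; exact Finset.inter_subset_left
  have hAS : A ⊆ S := by
    rw [hA, hS]
    intro i hi
    exact Finset.mem_union_left _
      (Finset.mem_union_left _ (Finset.mem_inter.mp hi).2)
  have hΛΓS : Λ' \ Γ ⊆ S := by
    rw [hS]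
    intro i hi
    exact Finset.mem_union_left _ (Finset.mem_union_right _ hi)
  have hdisjA : Disjoint A (Λ' \ Γ) := by
    rw [Finset.disjoint_left]
    intro i hi hj
    exact (Finset.mem_sdiff.mp hj).2 (Finset.mem_sdiff.mp (hAsub hi)).1
  -- step chain for p
  have hxAeq : restr x A = restr x (Γ \ Λ') := by
    rw [hA]; exact HTPaux.restr_inter_supp x (Γ \ Λ')
  have hxsum : x = (x - u) + u := by funext i; simp
  have step1 : l2norm (restr x A) ≤
      l2norm (restr (x - u) A) + l2norm (restr u A) := by
    have hsp : restr x A = restr (x - u) A + restr u A := by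
      conv_lhs => rw [hxsum]
      exact HTPaux.restr_add _ _ _
    rw [hsp]
    exact HTPaux.l2norm_triangle _ _
  have step2 : l2norm (restr u A) ≤ l2norm (restr u (Γ \ Λ')) :=
    HTPaux.l2norm_restr_mono u hAsub
  have hcard2 : (Γ \ Λ').card = (Λ' \ Γ).card := by
    have h1 := Finset.card_sdiff_add_card_inter Γ Λ'
    have h2 := Finset.card_sdiff_add_card_inter Λ' Γ
    rw [Finset.inter_comm] at h2
    have hg1 := hΓ.1
    have hl1 := hΛ'.1
    omega
  have step3 : l2norm (restr u (Γ \ Λ')) ≤ l2norm (restr u (Λ' \ Γ)) := by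
    apply HTPaux.l2norm_mono_sum
    rw [HTPaux.sum_sq_restr, HTPaux.sum_sq_restr]
    exact HTPaux.topsupport_sum_le hΛ'.2 hcard2
      (fun j hj => (Finset.mem_sdiff.mp hj).2) Finset.sdiff_subset
  have step4 : l2norm (restr u (Λ' \ Γ)) ≤
      l2norm (restr (x - u) (Λ' \ Γ)) + l2norm (restr x (Λ' \ Γ)) := by
    have husum : u = (u - x) + x := by funext i; simp
    have hsp : restr u (Λ' \ Γ) = restr (u - x) (Λ' \ Γ) + restr x (Λ' \ Γ) := by
      conv_lhs => rw [husum]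
      exact HTPaux.restr_add _ _ _
    rw [hsp]
    have ht := HTPaux.l2norm_triangle (restr (u - x) (Λ' \ Γ)) (restr x (Λ' \ Γ))
    rwa [HTPaux.l2norm_restr_sub_comm u x] at ht
  have hp : l2norm (restr x (Γ \ Λ')) ≤
      l2norm (restr (x - u) A) + l2norm (restr (x - u) (Λ' \ Γ)) +
        l2norm (restr x (Λ' \ Γ)) := by
    rw [← hxAeq]
    linarith [step1, step2, step3, step4]
  -- squared estimates
  have he : (l2norm (restr (x - u) A))^2 + (l2norm (restr (x - u) (Λ' \ Γ)))^2 ≤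
      (δ * l2norm (w - x))^2 := by
    rw [HTPaux.l2norm_sq, HTPaux.l2norm_sq, ← HTPaux.sum_sq_restr_union (x - u) hdisjA]
    calc _ ≤ ∑ i, (restr (x - u) S i)^2 :=
          HTPaux.sum_sq_restr_mono _ (Finset.union_subset hAS hΛΓS)
      _ = (l2norm (restr (x - u) S))^2 := (HTPaux.l2norm_sq _).symm
      _ ≤ (δ * l2norm (w - x))^2 :=
          pow_le_pow_left₀ (HTPaux.l2norm_nonneg _) hd0 2
  have hdisj2 : Disjoint (Γᶜ ∩ Λ'ᶜ) (Λ' \ Γ) := by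
    rw [Finset.disjoint_left]
    intro i hi hj
    exact (Finset.mem_compl.mp (Finset.mem_inter.mp hi).2) (Finset.mem_sdiff.mp hj).1
  have hsub2 : (Γᶜ ∩ Λ'ᶜ) ∪ (Λ' \ Γ) ⊆ Γᶜ := by
    intro i hi
    rcases Finset.mem_union.mp hi with h | h
    · exact (Finset.mem_inter.mp h).1
    · exact Finset.mem_compl.mpr (Finset.mem_sdiff.mp h).2
  have hbc : (l2norm (restr x (Γᶜ ∩ Λ'ᶜ)))^2 + (l2norm (restr x (Λ' \ Γ)))^2 ≤
      (l2norm (restr x Γᶜ))^2 := by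
    rw [HTPaux.l2norm_sq, HTPaux.l2norm_sq, HTPaux.l2norm_sq,
      ← HTPaux.sum_sq_restr_union x hdisj2]
    exact HTPaux.sum_sq_restr_mono x hsub2
  -- rewrite LHS
  have hLHS : l2norm (restr (x' - x) Λ'ᶜ) = l2norm (restr x Λ'ᶜ) := by
    unfold l2norm
    congr 1
    apply Finset.sum_congr rfl
    intro i _
    by_cases h : i ∈ Λ'ᶜ
    · have hx'0 : x' i = 0 := by
        by_contra hne
        exact (Finset.mem_compl.mp h) (hx'.1 (by simp [suppF, hne]))
      simp only [restr, h, if_true, Pi.sub_apply, hx'0]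
      ring
    · simp [restr, h]
  have hsplitset : Λ'ᶜ = (Γ \ Λ') ∪ (Γᶜ ∩ Λ'ᶜ) := by
    ext i
    simp only [Finset.mem_compl, Finset.mem_union, Finset.mem_sdiff, Finset.mem_inter]
    tauto
  have hdisj3 : Disjoint (Γ \ Λ') (Γᶜ ∩ Λ'ᶜ) := by
    rw [Finset.disjoint_left]
    intro i hi hj
    exact Finset.mem_compl.mp (Finset.mem_inter.mp hj).1 (Finset.mem_sdiff.mp hi).1
  have hdecomp : (l2norm (restr x Λ'ᶜ))^2
      = (l2norm (restr x (Γ \ Λ')))^2 + (l2norm (restr x (Γᶜ ∩ Λ'ᶜ)))^2 := by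
    rw [HTPaux.l2norm_sq, HTPaux.l2norm_sq, HTPaux.l2norm_sq,
      ← HTPaux.sum_sq_restr_union x hdisj3, ← hsplitset]
  rw [hLHS]
  -- abbreviations
  set p := l2norm (restr x (Γ \ Λ')) with hpdef
  set e1 := l2norm (restr (x - u) A) with he1def
  set e2 := l2norm (restr (x - u) (Λ' \ Γ)) with he2def
  set cc := l2norm (restr x (Λ' \ Γ)) with hccdef
  set bb := l2norm (restr x (Γᶜ ∩ Λ'ᶜ)) with hbbdef
  set g := l2norm (restr x Γᶜ) with hgdef
  set d := δ * l2norm (w - x) with hddef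
  have hdnn : 0 ≤ d := mul_nonneg hδ (HTPaux.l2norm_nonneg _)
  have hgnn : 0 ≤ g := HTPaux.l2norm_nonneg _
  have hpnn : 0 ≤ p := HTPaux.l2norm_nonneg _
  have hccnn : 0 ≤ cc := HTPaux.l2norm_nonneg _
  have hbbnn : 0 ≤ bb := HTPaux.l2norm_nonneg _
  have he1nn : 0 ≤ e1 := HTPaux.l2norm_nonneg _
  have he2nn : 0 ≤ e2 := HTPaux.l2norm_nonneg _
  clear_value p e1 e2 cc bb g d
  have hcg : cc ≤ g := HTPaux.le_of_sq_le_sq hccnn hgnn (by nlinarith [hbc, sq_nonneg bb])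
  have hee : e1 + e2 ≤ 2 * d := by
    apply HTPaux.le_of_sq_le_sq (add_nonneg he1nn he2nn) (by linarith)
    nlinarith [he, sq_nonneg (e1 - e2), sq_nonneg d]
  have hcross : (e1 + e2) * cc ≤ (2 * d) * g :=
    mul_le_mul hee hcg hccnn (by linarith)
  have hp2 : p^2 ≤ (e1 + e2 + cc)^2 := pow_le_pow_left₀ hpnn hp 2
  have hRHSnn : 0 ≤ Real.sqrt 2 * δ * l2norm (w - x) + Real.sqrt 2 * g := by
    have h2 : (0:ℝ) ≤ Real.sqrt 2 := Real.sqrt_nonneg 2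
    have := mul_nonneg (mul_nonneg h2 hδ) (HTPaux.l2norm_nonneg (w - x))
    nlinarith [mul_nonneg h2 hgnn]
  apply HTPaux.le_of_sq_le_sq (HTPaux.l2norm_nonneg _) hRHSnn
  rw [hdecomp]
  have hRHSeq : (Real.sqrt 2 * δ * l2norm (w - x) + Real.sqrt 2 * g)^2
      = 2 * (d + g)^2 := by
    have h2 : (Real.sqrt 2)^2 = 2 := Real.sq_sqrt (by norm_num)
    have hstep : Real.sqrt 2 * δ * l2norm (w - x) + Real.sqrt 2 * g
        = Real.sqrt 2 * (d + g) := by rw [hddef]; ring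
    rw [hstep, mul_pow, h2]
  rw [hRHSeq]
  nlinarith [hp2, he, hbc, hcross, sq_nonneg (e1 - e2), sq_nonneg g]
end
end

section
/- Let Φ ∈ ℝ^{M×N} have restricted isometry constant δ_s of order s. Let u ∈ ℝ^N and let S ⊆ {1,…,N} be such that |S ∪ supp(u)| ≤ s. Then ‖((I − ΦᵀΦ)u)_S‖ ≤ δ_s·‖u‖, where I is the N×N identity matrix. -/
/-!
With `v = ((I − ΦᵀΦ)u)_S` one has `‖v‖² = ⟨v, (I − ΦᵀΦ)u⟩ = ⟨v, u⟩ − ⟨Φv, Φu⟩`, and `v`, `u` are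
both supported in `T = S ∪ supp u` with `|T| ≤ s`. Polarization turns the RIP bounds on the
`s`-sparse vectors `‖y‖x ± ‖x‖y` into `|⟨Φx, Φy⟩ − ⟨x, y⟩| ≤ δ‖x‖‖y‖` for `x`, `y` supported in
`T`, so `‖v‖² ≤ δ‖v‖‖u‖`.
-/

open Finset

noncomputable section

open Matrix

section DotProduct

variable {R ι : Type*} [CommRing R] [Fintype ι]

lemma dotProduct_add_smul_self_sub (c d : R) (p q : ι → R) :
    (c • p + d • q) ⬝ᵥ (c • p + d • q) - (c • p - d • q) ⬝ᵥ (c • p - d • q) =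
      4 * c * d * (p ⬝ᵥ q) := by
  simp only [add_dotProduct, dotProduct_add, sub_dotProduct, dotProduct_sub, smul_dotProduct,
    dotProduct_smul, smul_eq_mul, dotProduct_comm q p]
  ring

lemma dotProduct_add_smul_self_add (c d : R) (p q : ι → R) :
    (c • p + d • q) ⬝ᵥ (c • p + d • q) + (c • p - d • q) ⬝ᵥ (c • p - d • q) =
      2 * (c ^ 2 * (p ⬝ᵥ p) + d ^ 2 * (q ⬝ᵥ q)) := by
  simp only [add_dotProduct, dotProduct_add, sub_dotProduct, dotProduct_sub, smul_dotProduct,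
    dotProduct_smul, smul_eq_mul, dotProduct_comm q p]
  ring

end DotProduct

section Vectors

variable {n : ℕ}

lemma l2norm_nonneg (v : Fin n → ℝ) : 0 ≤ l2norm v := Real.sqrt_nonneg _

lemma sq_l2norm (v : Fin n → ℝ) : l2norm v ^ 2 = v ⬝ᵥ v := by
  rw [l2norm, Real.sq_sqrt (by positivity)]
  simp only [dotProduct, sq]

lemma l2norm_eq_zero {v : Fin n → ℝ} : l2norm v = 0 ↔ v = 0 := by
  rw [← pow_eq_zero_iff two_ne_zero, sq_l2norm, dotProduct_self_eq_zero]

lemma suppF_add_subset (x y : Fin n → ℝ) : suppF (x + y) ⊆ suppF x ∪ suppF y := by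
  intro i hi
  by_contra hxy
  simp_all [suppF]

lemma suppF_smul_subset (c : ℝ) (x : Fin n → ℝ) : suppF (c • x) ⊆ suppF x := by
  intro i
  simp only [suppF, mem_filter, mem_univ, true_and, Pi.smul_apply, smul_eq_mul]
  exact right_ne_zero_of_mul

lemma suppF_smul_add_smul_subset {T : Finset (Fin n)} (c d : ℝ) {x y : Fin n → ℝ}
    (hx : suppF x ⊆ T) (hy : suppF y ⊆ T) : suppF (c • x + d • y) ⊆ T :=
  (suppF_add_subset _ _).trans <|
    union_subset ((suppF_smul_subset c x).trans hx) ((suppF_smul_subset d y).trans hy)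

lemma suppF_smul_sub_smul_subset {T : Finset (Fin n)} (c d : ℝ) {x y : Fin n → ℝ}
    (hx : suppF x ⊆ T) (hy : suppF y ⊆ T) : suppF (c • x - d • y) ⊆ T := by
  simpa only [sub_eq_add_neg, ← neg_smul] using suppF_smul_add_smul_subset c (-d) hx hy

lemma suppF_restr_subset (v : Fin n → ℝ) (S : Finset (Fin n)) : suppF (restr v S) ⊆ S := by
  intro i hi
  by_contra hiS
  simp [suppF, restr, hiS] at hi

lemma restr_dotProduct_self (v : Fin n → ℝ) (S : Finset (Fin n)) :
    restr v S ⬝ᵥ restr v S = restr v S ⬝ᵥ v := by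
  refine sum_congr rfl fun i _ => ?_
  by_cases hi : i ∈ S <;> simp [restr, hi]

end Vectors

namespace HasRIC

variable {M N s : ℕ} {Φ : Matrix (Fin M) (Fin N) ℝ} {δ : ℝ}

lemma abs_dotProduct_self_sub_le (hΦ : HasRIC Φ s δ) {z : Fin N → ℝ} (hz : sparsity z ≤ s) :
    |Φ *ᵥ z ⬝ᵥ Φ *ᵥ z - z ⬝ᵥ z| ≤ δ * (z ⬝ᵥ z) := by
  obtain ⟨hlow, hup⟩ := hΦ.2 z hz
  rw [sq_l2norm, sq_l2norm] at hlow hup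
  exact abs_le.mpr ⟨by linarith, by linarith⟩

lemma mul_l2norm_nonneg (hΦ : HasRIC Φ s δ) {z : Fin N → ℝ} (hz : sparsity z ≤ s) :
    0 ≤ δ * l2norm z := by
  rcases (l2norm_nonneg z).eq_or_lt with hzero | hpos
  · rw [← hzero, mul_zero]
  · refine nonneg_of_mul_nonneg_left ?_ hpos
    have := (abs_nonneg _).trans (hΦ.abs_dotProduct_self_sub_le hz)
    rwa [← sq_l2norm, sq, ← mul_assoc] at this

lemma abs_dotProduct_sub_le (hΦ : HasRIC Φ s δ) {T : Finset (Fin N)} (hT : T.card ≤ s)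
    {x y : Fin N → ℝ} (hx : suppF x ⊆ T) (hy : suppF y ⊆ T) :
    |Φ *ᵥ x ⬝ᵥ Φ *ᵥ y - x ⬝ᵥ y| ≤ δ * l2norm x * l2norm y := by
  rcases (mul_nonneg (l2norm_nonneg x) (l2norm_nonneg y)).eq_or_lt with hXY | hXY
  · rw [mul_assoc, ← hXY, mul_zero]
    rcases mul_eq_zero.mp hXY.symm with h | h <;> simp [l2norm_eq_zero.mp h]
  set X := l2norm x
  set Y := l2norm y
  set a := Y • x + X • y
  set b := Y • x - X • y
  have hA := hΦ.abs_dotProduct_self_sub_le (z := a)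
    ((card_le_card (suppF_smul_add_smul_subset Y X hx hy)).trans hT)
  have hB := hΦ.abs_dotProduct_self_sub_le (z := b)
    ((card_le_card (suppF_smul_sub_smul_subset Y X hx hy)).trans hT)
  have hdiff : (Φ *ᵥ a ⬝ᵥ Φ *ᵥ a - a ⬝ᵥ a) - (Φ *ᵥ b ⬝ᵥ Φ *ᵥ b - b ⬝ᵥ b) =
      4 * (X * Y) * (Φ *ᵥ x ⬝ᵥ Φ *ᵥ y - x ⬝ᵥ y) := by
    have hΦa : Φ *ᵥ a = Y • Φ *ᵥ x + X • Φ *ᵥ y := by simp only [a, mulVec_add, mulVec_smul]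
    have hΦb : Φ *ᵥ b = Y • Φ *ᵥ x - X • Φ *ᵥ y := by simp only [b, mulVec_sub, mulVec_smul]
    rw [sub_sub_sub_comm, hΦa, hΦb, dotProduct_add_smul_self_sub, dotProduct_add_smul_self_sub]
    ring
  have hsum : a ⬝ᵥ a + b ⬝ᵥ b = 4 * (X * Y) * (X * Y) := by
    rw [dotProduct_add_smul_self_add, ← sq_l2norm, ← sq_l2norm]
    ring
  have : 4 * (X * Y) * |Φ *ᵥ x ⬝ᵥ Φ *ᵥ y - x ⬝ᵥ y| ≤ 4 * (X * Y) * (δ * X * Y) :=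
    calc 4 * (X * Y) * |Φ *ᵥ x ⬝ᵥ Φ *ᵥ y - x ⬝ᵥ y|
        = |(Φ *ᵥ a ⬝ᵥ Φ *ᵥ a - a ⬝ᵥ a) - (Φ *ᵥ b ⬝ᵥ Φ *ᵥ b - b ⬝ᵥ b)| := by
          rw [hdiff, abs_mul, abs_of_pos (by linarith : (0 : ℝ) < 4 * (X * Y))]
      _ ≤ δ * (a ⬝ᵥ a) + δ * (b ⬝ᵥ b) := (abs_sub _ _).trans (add_le_add hA hB)
      _ = 4 * (X * Y) * (δ * X * Y) := by rw [← mul_add, hsum]; ring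
  exact le_of_mul_le_mul_left this (by linarith)

end HasRIC

lemma dotProduct_one_sub_transpose_mul_mulVec {M N : ℕ} (Φ : Matrix (Fin M) (Fin N) ℝ)
    (v u : Fin N → ℝ) : v ⬝ᵥ ((1 - Φᵀ * Φ) *ᵥ u) = v ⬝ᵥ u - Φ *ᵥ v ⬝ᵥ Φ *ᵥ u := by
  rw [sub_mulVec, one_mulVec, dotProduct_sub, ← mulVec_mulVec, dotProduct_mulVec,
    vecMul_transpose]

/-- RIP consequence: `‖((I − ΦᵀΦ)u)_S‖ ≤ δ_s‖u‖` whenever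
`|S ∪ supp(u)| ≤ s`. -/
theorem rip_offdiagonal_bound {M N : ℕ} (Φ : Matrix (Fin M) (Fin N) ℝ)
    (s : ℕ) (δ : ℝ) (hRIC : HasRIC Φ s δ)
    (u : Fin N → ℝ) (S : Finset (Fin N)) (hcard : (S ∪ suppF u).card ≤ s) :
    l2norm (restr (((1 : Matrix (Fin N) (Fin N) ℝ) - Φ.transpose * Φ).mulVec u) S) ≤
      δ * l2norm u := by
  set v := restr (((1 : Matrix (Fin N) (Fin N) ℝ) - Φ.transpose * Φ).mulVec u) S
  have hv : suppF v ⊆ S ∪ suppF u := (suppF_restr_subset _ _).trans subset_union_left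
  have hu : suppF u ⊆ S ∪ suppF u := subset_union_right
  have hsq : l2norm v ^ 2 = -(Φ *ᵥ v ⬝ᵥ Φ *ᵥ u - v ⬝ᵥ u) := by
    rw [sq_l2norm, restr_dotProduct_self, dotProduct_one_sub_transpose_mul_mulVec, neg_sub]
  have hle : l2norm v ^ 2 ≤ δ * l2norm v * l2norm u :=
    hsq ▸ (neg_le_abs _).trans (hRIC.abs_dotProduct_sub_le hcard hv hu)
  have hδu : 0 ≤ δ * l2norm u := hRIC.mul_l2norm_nonneg ((card_le_card hu).trans hcard)
  nlinarith [l2norm_nonneg v]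
end
end
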